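/- Let A_i = XP_N(p_i|x_i|z_i) for i < r be XP operators with binary x-components and let m : Fin n → Fin 2 be a bit string. Then there exists q : Finset (Fin r) → ℤ such that for every u : Fin r → Fin 2, (A₀^(u 0) * ⋯ * A_{r−1}^(u (r−1))).mulVec |m⟩ = ω^(f u) • |m ⊕ s_u⟩, where s_u is the componentwise mod-2 sum of the x_i over those i with u i = 1, and f u = ∑ over nonempty subsets s of Fin r of q s * 2^(s.card − 1) * ∏_{j ∈ s} (u j : ℤ). Moreover, if N = 2^t then q can be chosen to vanish on all subsets s with s.card > t + 1; that is, the phase function of any precision-2^t XP stabiliser state is a polynomial of degree at most t+1 in the orbit variables. -/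

import Mathlib

/-!
An XP operator with binary x-part sends `|v⟩` to `ω^(p + 2 z⬝v) |v ⊕ x⟩`. Applying the factors of
`∏ A_i^(u i)` to `|m⟩` one at a time, the accumulated exponent is a sum of terms `u_i p_i` and
`2 u_i z_ik v_k`, where each `v_k` is an XOR of `m_k` and some of the `u_j`. Expanding XORs by
`a ⊕ b = a + b - 2ab` puts all these terms in the ℤ-span of the scaled monomials `2^(|s|-1) u^s`,
because that span contains every `u_i` and is closed under multiplication by `2 u_j`.
When `N = 2^t`, a scaled monomial with `|s| > t + 1` is a multiple of `2N`, and `ω^(2N) = 1`.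
-/

open Matrix Fin.NatCast

/-- `ω = exp(πi/N)`. -/
noncomputable def omN (N : ℕ) : ℂ := Complex.exp (Real.pi * Complex.I / N)

/-- The Pauli X matrix. -/
def Xm : Matrix (Fin 2) (Fin 2) ℂ := !![0, 1; 1, 0]

/-- The precision-`N` phase matrix `P = diag(1, ω²)`. -/
noncomputable def Pm (N : ℕ) : Matrix (Fin 2) (Fin 2) ℂ := !![1, 0; 0, (omN N) ^ 2]

/-- The precision-`N` XP operator `XP_N(p|x|z)` on `n` qubits, the matrix indexed by bit
strings whose `(f, e)` entry is `ω^p * ∏ i, (X^(x i) * P^(z i)) (f i) (e i)`. -/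
noncomputable def XP (N n : ℕ) (p : ℤ) (x z : Fin n → ℤ) :
    Matrix (Fin n → Fin 2) (Fin n → Fin 2) ℂ :=
  Matrix.of fun f e => (omN N) ^ p * ∏ i, ((Xm ^ (x i)) * (Pm N) ^ (z i)) (f i) (e i)

/-- The antisymmetric operator `D_N(z) = XP_N(∑ i, z i | 0 | -z)`. -/
noncomputable def DN (N n : ℕ) (z : Fin n → ℤ) :
    Matrix (Fin n → Fin 2) (Fin n → Fin 2) ℂ :=
  XP N n (∑ i, z i) 0 (-z)

/-- A vector is binary if every entry is 0 or 1. -/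
def IsBinary {n : ℕ} (x : Fin n → ℤ) : Prop := ∀ i, x i = 0 ∨ x i = 1

open Finset

lemma omN_ne_zero (N : ℕ) : omN N ≠ 0 := Complex.exp_ne_zero _

lemma omN_zpow_two_mul (N : ℕ) : omN N ^ (2 * (N : ℤ)) = 1 := by
  rcases eq_or_ne N 0 with rfl | hN
  · simp
  have hexp : ((2 * N : ℤ) : ℂ) * (Real.pi * Complex.I / N) = 2 * Real.pi * Complex.I := by
    push_cast
    field_simp
  rw [omN, ← Complex.exp_int_mul, hexp, Complex.exp_two_pi_mul_I]

lemma omN_zpow_congr {N : ℕ} {a b : ℤ} (h : a ≡ b [ZMOD 2 * N]) : omN N ^ a = omN N ^ b := by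
  obtain ⟨k, hk⟩ := h.dvd
  rw [show b = a + 2 * N * k by omega, zpow_add₀ (omN_ne_zero N), _root_.zpow_mul, omN_zpow_two_mul,
    _root_.one_zpow, mul_one]

lemma prod_zpow_eq_zpow_sum {ι G₀ : Type*} [CommGroupWithZero G₀] {a : G₀} (ha : a ≠ 0)
    (s : Finset ι) (e : ι → ℤ) : ∏ i ∈ s, a ^ e i = a ^ ∑ i ∈ s, e i := by
  induction s using Finset.cons_induction with
  | empty => simp
  | cons i s hi ih => rw [prod_cons, sum_cons, ih, zpow_add₀ ha]

lemma fin_two_val_mul_self (a : Fin 2) : (a : ℤ) * a = a := by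
  fin_cases a <;> rfl

lemma fin_two_val_add (a b : Fin 2) : ((a + b : Fin 2) : ℤ) = a + b - 2 * a * b := by
  fin_cases a <;> fin_cases b <;> rfl

lemma fin_two_natCast_val_mul (a : Fin 2) (b : ℕ) :
    (((a : ℕ) * b : ℕ) : Fin 2) = a * (b : Fin 2) := by
  fin_cases a <;> simp

lemma Pm_zpow (N : ℕ) (z : ℤ) : Pm N ^ z = diagonal fun b : Fin 2 => omN N ^ (2 * z * b) := by
  have hP : Pm N = diagonal fun b : Fin 2 => omN N ^ (2 * b : ℤ) := by
    ext a b
    fin_cases a <;> fin_cases b <;> simp [Pm]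
  have hdet : IsUnit (Pm N).det := by
    simp [hP, det_diagonal, omN_ne_zero]
  induction z using Int.induction_on with
  | zero => simp
  | succ z ih =>
    rw [zpow_add_one hdet, ih, hP, diagonal_mul_diagonal]
    congr! 2 with b
    rw [← zpow_add₀ (omN_ne_zero N)]
    ring_nf
  | pred z ih =>
    have hunit : IsUnit (Pm N) := (isUnit_iff_isUnit_det _).mpr hdet
    rw [← hunit.mul_left_inj, ← zpow_add_one hdet, sub_add_cancel, ih, hP, diagonal_mul_diagonal]
    congr! 2 with b
    rw [← zpow_add₀ (omN_ne_zero N)]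
    ring_nf

lemma Xm_zpow_mul_Pm_zpow_apply (N : ℕ) {x : ℤ} (hx : x = 0 ∨ x = 1) (z : ℤ) (a b : Fin 2) :
    (Xm ^ x * Pm N ^ z) a b = if a = b + (x.toNat : Fin 2) then omN N ^ (2 * z * b) else 0 := by
  rw [Pm_zpow, mul_diagonal]
  rcases hx with rfl | rfl <;> fin_cases a <;> fin_cases b <;> simp [Xm, one_apply]

lemma XP_mulVec_single (N n : ℕ) (p : ℤ) {x : Fin n → ℤ} (hx : IsBinary x) (z : Fin n → ℤ)
    (v : Fin n → Fin 2) :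
    XP N n p x z *ᵥ Pi.single v 1 =
      omN N ^ (p + 2 * ∑ k, z k * (v k : ℤ)) •
        Pi.single (v + fun k => ((x k).toNat : Fin 2)) (1 : ℂ) := by
  ext f
  simp only [mulVec_single, XP, Pi.smul_apply, col_apply, of_apply, MulOpposite.op_one, one_smul,
    Xm_zpow_mul_Pm_zpow_apply N (hx _), prod_ite_zero, prod_zpow_eq_zpow_sum (omN_ne_zero N)]
  have hsum : ∑ k, 2 * z k * (v k : ℤ) = 2 * ∑ k, z k * (v k : ℤ) := by
    rw [mul_sum]; simp only [mul_assoc]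
  have htarget :
      (∀ k, f k = v k + ((x k).toNat : Fin 2)) ↔ f = v + fun k => ((x k).toNat : Fin 2) :=
    funext_iff.symm
  simp only [mem_univ, forall_const, htarget, Pi.single_apply, smul_eq_mul, hsum,
    zpow_add₀ (omN_ne_zero N)]
  split_ifs <;> simp

lemma XP_pow_mulVec_single (N n : ℕ) (p : ℤ) {x : Fin n → ℤ} (hx : IsBinary x) (z : Fin n → ℤ)
    (v : Fin n → Fin 2) (e : Fin 2) :
    XP N n p x z ^ (e : ℕ) *ᵥ Pi.single v 1 =
      omN N ^ ((e : ℤ) * (p + 2 * ∑ k, z k * (v k : ℤ))) •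
        Pi.single (v + fun k => e * ((x k).toNat : Fin 2)) (1 : ℂ) := by
  fin_cases e
  · simp only [pow_zero, one_mulVec]
    simp [← Pi.zero_def]
  · simp [XP_mulVec_single N n p hx]

section PhasePolynomials

variable {ι : Type*}

def phaseMonomial (s : Finset ι) (u : ι → Fin 2) : ℤ := 2 ^ (s.card - 1) * ∏ j ∈ s, (u j : ℤ)

lemma phaseMonomial_modEq_zero {s : Finset ι} {t : ℕ} (hs : t + 1 < s.card)
    (u : ι → Fin 2) : phaseMonomial s u ≡ 0 [ZMOD 2 ^ (t + 1)] :=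
  Int.modEq_zero_iff_dvd.mpr ((pow_dvd_pow 2 (by omega)).mul_right _)

variable [Fintype ι]

def phasePoly : (Finset ι → ℤ) →ₗ[ℤ] (ι → Fin 2) → ℤ :=
  ∑ s ∈ univ.powerset.filter (fun s : Finset ι => s.Nonempty),
    (LinearMap.proj s).smulRight (phaseMonomial s)

lemma phasePoly_apply (q : Finset ι → ℤ) :
    phasePoly q = ∑ s ∈ univ.powerset.filter (fun s : Finset ι => s.Nonempty),
      q s • phaseMonomial s := by
  simp [phasePoly]

variable (ι) in
def phasePolys : Submodule ℤ ((ι → Fin 2) → ℤ) := LinearMap.range (phasePoly (ι := ι))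

namespace phasePolys

lemma phaseMonomial_mem {s : Finset ι} (hs : s.Nonempty) : phaseMonomial s ∈ phasePolys ι := by
  classical
  refine ⟨Pi.single s 1, ?_⟩
  ext u
  simp [phasePoly, Pi.single_apply, apply_ite (fun f : (ι → Fin 2) → ℤ => f u), hs]

lemma bit_mem (i : ι) : (fun u : ι → Fin 2 => (u i : ℤ)) ∈ phasePolys ι := by
  convert phaseMonomial_mem (singleton_nonempty i) using 1
  ext u
  simp [phaseMonomial]

lemma two_mul_bit_mul_phaseMonomial_mem (j : ι) {s : Finset ι} (hs : s.Nonempty) :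
    (fun u => 2 * (u j : ℤ) * phaseMonomial s u) ∈ phasePolys ι := by
  classical
  by_cases hj : j ∈ s
  · convert (phasePolys ι).smul_mem 2 (phaseMonomial_mem hs) using 1
    ext u
    simp only [phaseMonomial, Pi.smul_apply, smul_eq_mul, ← mul_prod_erase s _ hj]
    linear_combination
      (2 * 2 ^ (s.card - 1) * ∏ k ∈ s.erase j, (u k : ℤ)) * fin_two_val_mul_self (u j)
  · convert phaseMonomial_mem (insert_nonempty j s) using 1
    ext u
    obtain ⟨k, hk⟩ := Nat.exists_eq_add_one_of_ne_zero hs.card_pos.ne'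
    simp only [phaseMonomial, prod_insert hj, card_insert_of_notMem hj, hk, Nat.add_sub_cancel]
    ring

lemma two_mul_bit_mul_mem (j : ι) {h : (ι → Fin 2) → ℤ} (hh : h ∈ phasePolys ι) :
    (fun u => 2 * (u j : ℤ) * h u) ∈ phasePolys ι := by
  obtain ⟨q, rfl⟩ := hh
  have hsum : (fun u => 2 * (u j : ℤ) * phasePoly q u) =
      ∑ s ∈ univ.powerset.filter (fun s : Finset ι => s.Nonempty),
        q s • fun u => 2 * (u j : ℤ) * phaseMonomial s u := by
    ext u
    simp only [phasePoly_apply, Finset.sum_apply, Pi.smul_apply, smul_eq_mul, mul_sum]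
    exact sum_congr rfl fun s _ => by ring
  rw [hsum]
  refine sum_mem fun s hs => (phasePolys ι).smul_mem _ ?_
  exact two_mul_bit_mul_phaseMonomial_mem j (mem_filter.mp hs).2

lemma two_mul_bit_mul_affine_mem (i : ι) (c : Fin 2) (a : ι → Fin 2) (L : List ι) :
    (fun u : ι → Fin 2 => 2 * (u i : ℤ) * ((c + (L.map fun j => u j * a j).sum : Fin 2) : ℤ)) ∈
      phasePolys ι := by
  induction L with
  | nil =>
    convert (phasePolys ι).smul_mem (2 * (c : ℤ)) (bit_mem i) using 1
    ext u
    simp only [List.map_nil, List.sum_nil, add_zero, Pi.smul_apply, smul_eq_mul]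
    ring
  | cons j L ih =>
    obtain h | h : a j = 0 ∨ a j = 1 := by omega
    · simpa [h] using ih
    set S := fun u : ι → Fin 2 => ((c + (L.map fun j => u j * a j).sum : Fin 2) : ℤ)
    have hsplit : (fun u : ι → Fin 2 =>
        2 * (u i : ℤ) * ((c + ((j :: L).map fun j => u j * a j).sum : Fin 2) : ℤ)) =
        (fun u => 2 * (u i : ℤ) * S u) + (fun u => 2 * (u j : ℤ) * (u i : ℤ)) -
          fun u => 2 * (u j : ℤ) * (2 * (u i : ℤ) * S u) := by
      ext u
      simp only [List.map_cons, List.sum_cons, h, mul_one, add_left_comm c, fin_two_val_add, S,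
        Pi.add_apply, Pi.sub_apply]
      ring
    rw [hsplit]
    exact sub_mem (add_mem ih (two_mul_bit_mul_mem j (bit_mem i))) (two_mul_bit_mul_mem j ih)

end phasePolys

lemma phasePoly_modEq_truncate (q : Finset ι → ℤ) (t : ℕ) (u : ι → Fin 2) :
    phasePoly q u ≡
      phasePoly (fun s => if s.card ≤ t + 1 then q s else 0) u [ZMOD 2 ^ (t + 1)] := by
  simp only [phasePoly_apply, Finset.sum_apply, Pi.smul_apply, smul_eq_mul]
  refine Int.ModEq.sum fun s _ => ?_
  split_ifs with hs
  · rfl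
  · simpa using (phaseMonomial_modEq_zero (by omega) u).mul_left (q s)

end PhasePolynomials

lemma XP_list_prod_mulVec_single {ι : Type*} [Fintype ι] (N n : ℕ) (p : ι → ℤ)
    {x : ι → Fin n → ℤ} (hx : ∀ i, IsBinary (x i)) (z : ι → Fin n → ℤ) (m : Fin n → Fin 2)
    (L : List ι) :
    ∃ φ ∈ phasePolys ι, ∀ u : ι → Fin 2,
      (L.map fun i => XP N n (p i) (x i) (z i) ^ (u i : ℕ)).prod *ᵥ Pi.single m 1 =
        omN N ^ φ u •
          Pi.single (fun k => m k + (L.map fun j => u j * ((x j k).toNat : Fin 2)).sum) (1 : ℂ) := by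
  induction L with
  | nil =>
    refine ⟨0, zero_mem _, fun u => ?_⟩
    simp only [List.map_nil, List.prod_nil, one_mulVec]
    simp
  | cons i L ih =>
    obtain ⟨φ, hφ, hact⟩ := ih
    set v := fun (u : ι → Fin 2) k => m k + (L.map fun j => u j * ((x j k).toNat : Fin 2)).sum
    refine ⟨φ + fun u => (u i : ℤ) * (p i + 2 * ∑ k, z i k * (v u k : ℤ)), add_mem hφ ?_,
      fun u => ?_⟩
    · have hsplit : (fun u : ι → Fin 2 => (u i : ℤ) * (p i + 2 * ∑ k, z i k * (v u k : ℤ))) =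
          p i • (fun u => (u i : ℤ)) + ∑ k, z i k • fun u => 2 * (u i : ℤ) * (v u k : ℤ) := by
        ext u
        simp only [Pi.add_apply, Pi.smul_apply, Finset.sum_apply, smul_eq_mul, mul_add, mul_sum]
        exact congr_arg₂ _ (mul_comm _ _) (sum_congr rfl fun k _ => by ring)
      rw [hsplit]
      refine add_mem (Submodule.smul_mem _ _ (phasePolys.bit_mem i)) (sum_mem fun k _ => ?_)
      exact Submodule.smul_mem _ _ (phasePolys.two_mul_bit_mul_affine_mem i (m k) _ L)
    · rw [List.map_cons, List.prod_cons, ← mulVec_mulVec, hact, mulVec_smul,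
        XP_pow_mulVec_single N n (p i) (hx i), smul_smul, ← zpow_add₀ (omN_ne_zero N)]
      congr 2
      funext k
      simp only [Pi.add_apply, List.map_cons, List.sum_cons]
      rw [add_assoc, add_comm (List.sum _)]

theorem XP_phase_function_general (N n r : ℕ)
    (p : Fin r → ℤ) (x z : Fin r → Fin n → ℤ)
    (hx : ∀ i, IsBinary (x i)) (m : Fin n → Fin 2) :
    (∃ q : Finset (Fin r) → ℤ, ∀ u : Fin r → Fin 2,
        ((List.ofFn fun i => XP N n (p i) (x i) (z i) ^ (u i : ℕ)).prod).mulVec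
            (Pi.single m 1) =
          (omN N) ^ (∑ s ∈ Finset.univ.powerset.filter (fun s : Finset (Fin r) => s.Nonempty),
              q s * 2 ^ (s.card - 1) * ∏ j ∈ s, ((u j : ℕ) : ℤ)) •
            (Pi.single (fun j => m j + ((∑ i, (u i : ℕ) * (x i j).toNat : ℕ) : Fin 2)) 1 :
              (Fin n → Fin 2) → ℂ)) ∧
      ∀ t : ℕ, N = 2 ^ t →
        ∃ q : Finset (Fin r) → ℤ, (∀ s : Finset (Fin r), t + 1 < s.card → q s = 0) ∧
          ∀ u : Fin r → Fin 2,
            ((List.ofFn fun i => XP N n (p i) (x i) (z i) ^ (u i : ℕ)).prod).mulVec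
                (Pi.single m 1) =
              (omN N) ^ (∑ s ∈ Finset.univ.powerset.filter
                    (fun s : Finset (Fin r) => s.Nonempty),
                  q s * 2 ^ (s.card - 1) * ∏ j ∈ s, ((u j : ℕ) : ℤ)) •
                (Pi.single (fun j => m j + ((∑ i, (u i : ℕ) * (x i j).toNat : ℕ) : Fin 2)) 1 :
                  (Fin n → Fin 2) → ℂ) := by
  obtain ⟨_, ⟨q, rfl⟩, hact⟩ := XP_list_prod_mulVec_single N n p hx z m (List.finRange r)
  have hstate (u : Fin r → Fin 2) :
      (fun k => m k + ((List.finRange r).map fun j => u j * ((x j k).toNat : Fin 2)).sum) =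
        fun k => m k + ((∑ i, (u i : ℕ) * (x i k).toNat : ℕ) : Fin 2) := by
    funext k
    simp [Fin.sum_univ_def, Function.comp_def, fin_two_natCast_val_mul]
  have hphase (q : Finset (Fin r) → ℤ) (u : Fin r → Fin 2) :
      phasePoly q u = ∑ s ∈ Finset.univ.powerset.filter (fun s : Finset (Fin r) => s.Nonempty),
        q s * 2 ^ (s.card - 1) * ∏ j ∈ s, ((u j : ℕ) : ℤ) := by
    simp [phasePoly_apply, phaseMonomial, mul_assoc]
  refine ⟨⟨q, fun u => ?_⟩, fun t ht =>
    ⟨fun s => if s.card ≤ t + 1 then q s else 0, fun s hs => if_neg (by omega), fun u => ?_⟩⟩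
  · rw [List.ofFn_eq_map, hact, hstate, hphase]
  · have h2N : (2 ^ (t + 1) : ℤ) = 2 * N := by rw [ht]; push_cast; ring
    rw [List.ofFn_eq_map, hact, hstate, ← hphase,
      omN_zpow_congr (h2N ▸ phasePoly_modEq_truncate q t u)]

/-- **Phase functions of XP stabiliser states**: for XP operators `A_i = XP_N(p_i|x_i|z_i)`
with binary x-components and a bit string `m`, there is `q : Finset (Fin r) → ℤ` with
`(∏_i A_i^{u i})|m⟩ = ω^(f u) |m ⊕ s_u⟩` where
`f u = ∑_{∅ ≠ s} q s ⬝ 2^(|s|−1) ∏_{j ∈ s} u_j`; moreover if `N = 2^t` then `q` can be chosen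
to vanish on all subsets of size `> t+1`, i.e. the phase function has degree at most `t+1`. -/
theorem XP_phase_function (N n r : ℕ) (hN : 2 ≤ N) (hn : 1 ≤ n)
    (p : Fin r → ℤ) (x z : Fin r → Fin n → ℤ)
    (hx : ∀ i, IsBinary (x i)) (m : Fin n → Fin 2) :
    (∃ q : Finset (Fin r) → ℤ, ∀ u : Fin r → Fin 2,
        ((List.ofFn fun i => XP N n (p i) (x i) (z i) ^ (u i : ℕ)).prod).mulVec
            (Pi.single m 1) =
          (omN N) ^ (∑ s ∈ Finset.univ.powerset.filter (fun s : Finset (Fin r) => s.Nonempty),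
              q s * 2 ^ (s.card - 1) * ∏ j ∈ s, ((u j : ℕ) : ℤ)) •
            (Pi.single (fun j => m j + ((∑ i, (u i : ℕ) * (x i j).toNat : ℕ) : Fin 2)) 1 :
              (Fin n → Fin 2) → ℂ)) ∧
      ∀ t : ℕ, N = 2 ^ t →
        ∃ q : Finset (Fin r) → ℤ, (∀ s : Finset (Fin r), t + 1 < s.card → q s = 0) ∧
          ∀ u : Fin r → Fin 2,
            ((List.ofFn fun i => XP N n (p i) (x i) (z i) ^ (u i : ℕ)).prod).mulVec
                (Pi.single m 1) =
              (omN N) ^ (∑ s ∈ Finset.univ.powerset.filter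
                    (fun s : Finset (Fin r) => s.Nonempty),
                  q s * 2 ^ (s.card - 1) * ∏ j ∈ s, ((u j : ℕ) : ℤ)) •
                (Pi.single (fun j => m j + ((∑ i, (u i : ℕ) * (x i j).toNat : ℕ) : Fin 2)) 1 :
                  (Fin n → Fin 2) → ℂ) :=
  XP_phase_function_general N n r p x z hx m
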